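/- arXiv:2301.03776 — 2 statements merged into one kernel-verified Lean document; each statement's English description precedes it below -/
import Mathlib

section
/- Let M be a saturated matroid, let H be a modular hyperplane of M, and let C* = E(M)−H be the complementary cocircuit. If C* is non-spanning, then (H, cl(C*)) is a modular cover of M. -/
open Set

namespace Matroid

variable {α : Type*} {β : Type*}

/-- The rank of a set in a matroid: the supremum of sizes of independent subsets. -/
noncomputable def mRank (M : Matroid α) (X : Set α) : ℕ :=
  sSup {n : ℕ | ∃ I, M.Indep I ∧ I ⊆ X ∧ I.ncard = n}

/-- The rank of a matroid. -/
noncomputable def mRk (M : Matroid α) : ℕ := M.mRank M.E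

/-- A flat `F` is modular if `r F + r F' = r (F ∪ F') + r (F ∩ F')` for every flat `F'`. -/
def IsModularFlat (M : Matroid α) (F : Set α) : Prop :=
  M.IsFlat F ∧ ∀ F', M.IsFlat F' →
    M.mRank F + M.mRank F' = M.mRank (F ∪ F') + M.mRank (F ∩ F')

/-- A proper flat is a flat other than the ground set. -/
def IsProperFlat (M : Matroid α) (F : Set α) : Prop := M.IsFlat F ∧ F ≠ M.E

/-- A vertical cover is a pair of proper flats whose union is the ground set. -/
def VerticalCover (M : Matroid α) (F F' : Set α) : Prop :=
  M.IsProperFlat F ∧ M.IsProperFlat F' ∧ F ∪ F' = M.E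

/-- A modular cover is a vertical cover by two modular flats. -/
def ModularCover (M : Matroid α) (F F' : Set α) : Prop :=
  M.VerticalCover F F' ∧ M.IsModularFlat F ∧ M.IsModularFlat F'

/-- A matroid is round if it has no vertical cover. -/
def Round (M : Matroid α) : Prop := ∀ F F', ¬ M.VerticalCover F F'

/-- A subset of the ground set is round if the restriction to it is round. -/
def RoundSet (M : Matroid α) (X : Set α) : Prop := X ⊆ M.E ∧ (M ↾ X).Round

/-- A rotunda is a maximal round flat. -/
def Rotunda (M : Matroid α) (R : Set α) : Prop :=
  M.IsFlat R ∧ M.RoundSet R ∧ ∀ R', M.IsFlat R' → M.RoundSet R' → R ⊆ R' → R' = R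

/-- A matroid of rank `r` is supersolvable if there is a chain of modular flats
`F 0 ⊆ F 1 ⊆ ⋯ ⊆ F r` with `r (F i) = i` for each `i`. -/
def Supersolvable (M : Matroid α) : Prop :=
  ∃ F : ℕ → Set α, (∀ i ≤ M.mRk, M.IsModularFlat (F i) ∧ M.mRank (F i) = i) ∧
    ∀ i < M.mRk, F i ⊆ F (i + 1)

/-- A matroid is saturated if every round flat is modular. -/
def Saturated (M : Matroid α) : Prop :=
  ∀ F, M.IsFlat F → M.RoundSet F → M.IsModularFlat F

/-- A circuit: a minimal dependent subset of the ground set. -/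
def Circ (M : Matroid α) (C : Set α) : Prop :=
  C ⊆ M.E ∧ ¬ M.Indep C ∧ ∀ D ⊂ C, M.Indep D

/-- A matroid is connected if it is non-empty and every two distinct elements lie in a
common circuit. -/
def ConnectedM (M : Matroid α) : Prop :=
  M.E.Nonempty ∧ ∀ x ∈ M.E, ∀ y ∈ M.E, x = y ∨ ∃ C, M.Circ C ∧ x ∈ C ∧ y ∈ C

/-- A hyperplane: a flat of rank `r M - 1`. -/
def IsHyperplane (M : Matroid α) (H : Set α) : Prop :=
  M.IsFlat H ∧ M.mRank H + 1 = M.mRk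

/-- The union of the projections `P_H(x, y) = H ∩ cl (x ∪ y)` onto the modular hyperplane `H`,
taken over all pairs of distinct rank-one flats `x = cl {a}`, `y = cl {b}` spanned by
elements `a, b` of `X`. -/
def projUnion (M : Matroid α) (H X : Set α) : Set α :=
  ⋃ a ∈ X, ⋃ b ∈ X, ⋃ (_ : M.closure {a} ≠ M.closure {b}), H ∩ M.closure {a, b}

/-- Two elements are related if they are equal or lie in a common circuit; the connected
components of a matroid are the restrictions to the equivalence classes of this relation. -/
def connRel (M : Matroid α) (x y : α) : Prop :=
  x = y ∨ ∃ C, M.Circ C ∧ x ∈ C ∧ y ∈ C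

/-- The rotunda graph of a matroid: vertices are the rotunda; two rotunda are adjacent if
they intersect and there is a modular cover separating them at their intersection. -/
def rotundaGraph (M : Matroid α) : SimpleGraph {R : Set α // M.Rotunda R} where
  Adj R₁ R₂ := R₁ ≠ R₂ ∧ (R₁.1 ∩ R₂.1).Nonempty ∧
    ∃ F₁ F₂, M.ModularCover F₁ F₂ ∧ R₁.1 ⊆ F₁ ∧ R₂.1 ⊆ F₂ ∧ F₁ ∩ F₂ = R₁.1 ∩ R₂.1
  symm := ⟨by
    rintro a b ⟨hne, hint, F₁, F₂, ⟨⟨hp1, hp2, hu⟩, hm1, hm2⟩, h1, h2, hi⟩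
    refine ⟨hne.symm, by rwa [Set.inter_comm], F₂, F₁,
      ⟨⟨hp2, hp1, by rwa [Set.union_comm]⟩, hm2, hm1⟩, h2, h1, ?_⟩
    rw [Set.inter_comm, hi, Set.inter_comm]⟩
  loopless := ⟨fun a h => h.1 rfl⟩

/-- A rotunda tree of `M`: a tree on the rotunda of `M` such that for each element `x` of the
ground set, the rotunda containing `x` induce a (nonempty) subtree. -/
def IsRotundaTree (M : Matroid α) (T : SimpleGraph {R : Set α // M.Rotunda R}) : Prop :=
  T.IsTree ∧ ∀ x ∈ M.E, (T.induce {t : {R : Set α // M.Rotunda R} | x ∈ t.1}).Connected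

/-- A legitimate weighting of `M`: zero on the empty set, and strictly monotone under proper
inclusion on the set consisting of `∅` and the pairwise intersections of distinct rotunda. -/
def LegitimateWeighting (M : Matroid α) (σ : Set α → ℕ) : Prop :=
  σ ∅ = 0 ∧
  ∀ X X' : Set α,
    (X = ∅ ∨ ∃ R R', M.Rotunda R ∧ M.Rotunda R' ∧ R ≠ R' ∧ X = R ∩ R') →
    (X' = ∅ ∨ ∃ R R', M.Rotunda R ∧ M.Rotunda R' ∧ R ≠ R' ∧ X' = R ∩ R') →
    X ⊂ X' → σ X < σ X'

/-- The total weight of a graph on the rotunda of `M`, where the edge joining rotunda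
`R` and `R'` gets weight `σ (R ∩ R')`. -/
noncomputable def treeWeight {M : Matroid α} (σ : Set α → ℕ)
    (T : SimpleGraph {R : Set α // M.Rotunda R}) : ℕ :=
  ∑ᶠ e ∈ T.edgeSet,
    Sym2.lift ⟨fun a b => σ (a.1 ∩ b.1), fun a b => by simp [Set.inter_comm]⟩ e

/-- A tree-decomposition of a matroid: a tree together with bags covering the ground set. -/
def IsTreeDecomp (M : Matroid α) (T : SimpleGraph β) (τ : β → Set α) : Prop :=
  T.IsTree ∧ ∀ x ∈ M.E, ∃ t, x ∈ τ t

/-- The node-width of a node `t` in a tree-decomposition `(T, τ)` of `M`: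
`(Σ_i r (τ t ∪ ⋃_{k ≠ i} F_k)) − (d − 1) · r M`, where `F_1, …, F_d` are the unions of the
bags over the connected components of `T − t`. -/
noncomputable def nodeWidth (M : Matroid α) (T : SimpleGraph β) (τ : β → Set α) (t : β) : ℤ :=
  (∑ᶠ c : (T.induce {s : β | s ≠ t}).ConnectedComponent,
      (M.mRank (τ t ∪ ⋃ (s : {s : β // s ≠ t})
        (_ : (T.induce {s : β | s ≠ t}).connectedComponentMk s ≠ c), τ s.1) : ℤ))
    - ((Nat.card (T.induce {s : β | s ≠ t}).ConnectedComponent : ℤ) - 1) * (M.mRk : ℤ)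

/-- The width of a tree-decomposition: the maximum node-width. -/
noncomputable def decompWidth (M : Matroid α) (T : SimpleGraph β) (τ : β → Set α) : ℤ :=
  sSup (Set.range (M.nodeWidth T τ))

/-- The tree-width of a matroid: the minimum width of a (finite) tree-decomposition. -/
noncomputable def treeWidth (M : Matroid α) : ℕ :=
  sInf {n : ℕ | ∃ (β : Type) (T : SimpleGraph β) (τ : β → Set α),
    Finite β ∧ M.IsTreeDecomp T τ ∧ ∀ t, M.nodeWidth T τ t ≤ (n : ℤ)}

end Matroid

namespace SimpleGraph

/-- A graph is chordal if every cycle with at least four edges has a chord: an edge of the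
graph joining two vertices of the cycle that is not an edge of the cycle. -/
def IsChordal {V : Type*} (G : SimpleGraph V) : Prop :=
  ∀ ⦃v : V⦄ (w : G.Walk v v), w.IsCycle → 4 ≤ w.length →
    ∃ x y, x ∈ w.support ∧ y ∈ w.support ∧ G.Adj x y ∧ s(x, y) ∉ w.edges

/-- A maximal clique of a graph. -/
def MaxClique {V : Type*} (G : SimpleGraph V) (C : Set V) : Prop :=
  G.IsClique C ∧ ∀ D, G.IsClique D → C ⊆ D → D = C

/-- The reduced clique graph of a graph: vertices are the maximal cliques; two maximal
cliques are adjacent if they intersect and every walk from one side to the other passes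
through their intersection. -/
def reducedCliqueGraph {V : Type*} (G : SimpleGraph V) :
    SimpleGraph {C : Set V // G.MaxClique C} where
  Adj C₁ C₂ := C₁ ≠ C₂ ∧ (C₁.1 ∩ C₂.1).Nonempty ∧
    ∀ u ∈ C₁.1 \ C₂.1, ∀ v ∈ C₂.1 \ C₁.1, ∀ p : G.Walk u v,
      ∃ z ∈ p.support, z ∈ C₁.1 ∩ C₂.1
  symm := ⟨by
    rintro a b ⟨hne, hint, hsep⟩
    refine ⟨hne.symm, by rwa [Set.inter_comm], fun u hu v hv p => ?_⟩
    obtain ⟨z, hz, hz2⟩ := hsep v hv u hu p.reverse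
    refine ⟨z, ?_, by rwa [Set.inter_comm]⟩
    simpa [SimpleGraph.Walk.support_reverse] using hz⟩
  loopless := ⟨fun a h => h.1 rfl⟩

end SimpleGraph

open Matroid

/-!
A line through two points of the cocircuit `E \ H` meets the modular hyperplane `H` in a nonloop
`p`, since `r (H ∩ L) = r H + r L - r (H ∪ L) ≥ (r M - 1) + 2 - r M = 1`. Given a vertical cover
`(F₁, F₂)` of `M | cl (E \ H)`, pick `a ∈ (E \ H) \ F₂` and `b ∈ (E \ H) \ F₁`, so `a ∈ F₁` and
`b ∈ F₂`. The point `p` of `H` on the line `ab` lies in `F₁` or `F₂`, and exchanging `p` with `a`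
(resp. `b`) puts the whole line into that flat, a contradiction. So `cl (E \ H)` is round, hence
modular by saturation.
-/

namespace Matroid

variable {α : Type*} {M : Matroid α} {X F H D : Set α} {a b p : α}

lemma IsHyperplane.ne_ground (hH : M.IsHyperplane H) : H ≠ M.E := by
  rintro rfl
  have h := hH.2
  rw [mRk] at h
  omega

section Rank

variable [M.Finite]

lemma mRank_eq_eRk : (M.mRank X : ℕ∞) = M.eRk X := by
  obtain ⟨I, hI⟩ := M.exists_isBasis' X
  have hfin : ∀ {J}, M.Indep J → J.Finite := fun hJ => M.ground_finite.subset hJ.subset_ground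
  have hgreatest : IsGreatest {n : ℕ | ∃ J, M.Indep J ∧ J ⊆ X ∧ J.ncard = n} I.ncard := by
    refine ⟨⟨I, hI.indep, hI.subset, rfl⟩, ?_⟩
    rintro n ⟨J, hJ, hJX, rfl⟩
    have hle := hJ.encard_le_eRk_of_subset hJX
    rwa [← hI.encard_eq_eRk, ← (hfin hJ).cast_ncard_eq, ← (hfin hI.indep).cast_ncard_eq,
      Nat.cast_le] at hle
  rw [mRank, hgreatest.csSup_eq, (hfin hI.indep).cast_ncard_eq, hI.encard_eq_eRk]

lemma mRank_mono {Y : Set α} (h : X ⊆ Y) : M.mRank X ≤ M.mRank Y := by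
  have hle := M.eRk_mono h
  rwa [← mRank_eq_eRk, ← mRank_eq_eRk, Nat.cast_le] at hle

lemma Indep.mRank_closure {I : Set α} (hI : M.Indep I) : M.mRank (M.closure I) = I.ncard := by
  have hfin : I.Finite := M.ground_finite.subset hI.subset_ground
  rw [← Nat.cast_inj (R := ℕ∞), mRank_eq_eRk, eRk_closure_eq, hI.eRk_eq_encard,
    hfin.cast_ncard_eq]

lemma exists_isNonloop_of_mRank_pos (h : 0 < M.mRank X) : ∃ p ∈ X, M.IsNonloop p := by
  by_contra! hX
  have hzero : M.eRk X = 0 := eRk_eq_zero_iff'.2 fun x hx =>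
    ((M.isLoop_or_isNonloop x hx.2).resolve_right (hX x hx.1))
  rw [← mRank_eq_eRk, Nat.cast_eq_zero] at hzero
  omega

lemma IsModularFlat.exists_isNonloop_mem_inter_closure_pair (hmod : M.IsModularFlat H)
    (hH : M.IsHyperplane H) (hb : M.IsNonloop b) (ha : a ∈ M.E \ M.closure {b}) :
    ∃ p ∈ H ∩ M.closure {a, b}, M.IsNonloop p := by
  have hab : M.Indep {a, b} := (hb.indep.insert_indep_iff_of_notMem
    fun h => ha.2 (M.subset_closure {b} (by simpa using hb.mem_ground) h)).2 ha
  have hne : a ≠ b := by rintro rfl; exact ha.2 (M.subset_closure {a} (by simpa using ha.1) rfl)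
  have hline : M.mRank (M.closure {a, b}) = 2 := by rw [hab.mRank_closure, ncard_pair hne]
  have hunion : M.mRank (H ∪ M.closure {a, b}) ≤ M.mRk :=
    mRank_mono (union_subset hH.1.subset_ground (M.closure_subset_ground _))
  have hsum := hmod.2 _ (M.isFlat_closure {a, b})
  have hrank := hH.2
  exact exists_isNonloop_of_mRank_pos (by omega)

end Rank

lemma IsFlat.closure_subset_of_subset (hF : M.IsFlat F) (hX : X ⊆ F) : M.closure X ⊆ F :=
  (M.closure_subset_closure hX).trans hF.closure.subset

lemma IsFlat.of_restrict (hX : M.IsFlat X) (hF : (M ↾ X).IsFlat F) : M.IsFlat F := by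
  have hFX : F ⊆ X := hF.subset_ground
  have hcl := hF.closure
  rwa [restrict_closure_eq _ hFX hX.subset_ground,
    inter_eq_self_of_subset_left (hX.closure_subset_of_subset hFX), ← isFlat_iff_closure_eq] at hcl

lemma IsFlat.exists_mem_notMem_of_ssubset_closure (hF : M.IsFlat F) (h : F ⊂ M.closure D) :
    ∃ d ∈ D, d ∉ F := by
  by_contra! hD
  exact h.not_subset (hF.closure_subset_of_subset hD)

lemma IsFlat.mem_of_isNonloop_mem_closure_pair (hF : M.IsFlat F) (hH : M.IsFlat H)
    (haF : a ∈ F) (haH : a ∉ H) (hpF : p ∈ F) (hpH : p ∈ H) (hp : M.IsNonloop p)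
    (hpab : p ∈ M.closure {b, a}) : b ∈ F := by
  have hpa : p ∉ M.closure {a} := fun h =>
    haH (hH.closure_subset_of_subset (singleton_subset_iff.2 hpH) (hp.mem_closure_singleton h))
  have hb : b ∈ M.closure {p, a} := (M.closure_exchange ⟨hpab, hpa⟩).1
  exact hF.closure_subset_of_subset (pair_subset hpF haF) hb

lemma IsModularFlat.roundSet_closure_compl [M.Finite] (hmod : M.IsModularFlat H)
    (hH : M.IsHyperplane H) : M.RoundSet (M.closure (M.E \ H)) := by
  refine ⟨M.closure_subset_ground _, ?_⟩
  rintro F₁ F₂ ⟨⟨hF₁, hF₁X⟩, ⟨hF₂, hF₂X⟩, hcover⟩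
  simp only [restrict_ground_eq] at hF₁X hF₂X hcover
  have hD : M.E \ H ⊆ M.closure (M.E \ H) := M.subset_closure _ sdiff_subset
  replace hF₁ := (M.isFlat_closure _).of_restrict hF₁
  replace hF₂ := (M.isFlat_closure _).of_restrict hF₂
  obtain ⟨a, haD, haF₂⟩ := hF₂.exists_mem_notMem_of_ssubset_closure
    (hcover ▸ subset_union_right |>.ssubset_of_ne hF₂X)
  obtain ⟨b, hbD, hbF₁⟩ := hF₁.exists_mem_notMem_of_ssubset_closure
    (hcover ▸ subset_union_left |>.ssubset_of_ne hF₁X)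
  have haF₁ : a ∈ F₁ := ((hcover ▸ hD haD : a ∈ F₁ ∪ F₂)).resolve_right haF₂
  have hbF₂ : b ∈ F₂ := ((hcover ▸ hD hbD : b ∈ F₁ ∪ F₂)).resolve_left hbF₁
  have hb : M.IsNonloop b :=
    (isNonloop_iff_notMem_loops hbD.1).2 fun h => hbD.2 (hH.1.loops_subset h)
  have ha : a ∈ M.E \ M.closure {b} :=
    ⟨haD.1, fun h => haF₂ (hF₂.closure_subset_of_subset (singleton_subset_iff.2 hbF₂) h)⟩
  obtain ⟨p, ⟨hpH, hpab⟩, hp⟩ := hmod.exists_isNonloop_mem_inter_closure_pair hH hb ha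
  have hpX : p ∈ F₁ ∪ F₂ := hcover ▸ M.closure_subset_closure (pair_subset haD hbD) hpab
  rcases hpX with hpF₁ | hpF₂
  · exact hbF₁ (hF₁.mem_of_isNonloop_mem_closure_pair hH.1 haF₁ haD.2 hpF₁ hpH hp
      (pair_comm a b ▸ hpab))
  · exact haF₂ (hF₂.mem_of_isNonloop_mem_closure_pair hH.1 hbF₂ hbD.2 hpF₂ hpH hp hpab)

lemma union_closure_compl_eq_ground (hH : H ⊆ M.E) : H ∪ M.closure (M.E \ H) = M.E :=
  (union_subset hH (M.closure_subset_ground _)).antisymm <|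
    (union_sdiff_cancel hH).symm.subset.trans
      (union_subset_union_right _ (M.subset_closure _ sdiff_subset))

end Matroid

/-- Let `M` be a saturated matroid, `H` a modular hyperplane, and `C* = E(M) − H` the
complementary cocircuit. If `C*` is non-spanning, then `(H, cl C*)` is a modular cover. -/
theorem modularCover_hyperplane_closure_cocircuit {α : Type*} (M : Matroid α) [M.Finite]
    (hsat : M.Saturated) (H : Set α) (hH : M.IsHyperplane H) (hmod : M.IsModularFlat H)
    (hns : ¬ M.Spanning (M.E \ H)) :
    M.ModularCover H (M.closure (M.E \ H)) := by
  have hproper : M.closure (M.E \ H) ≠ M.E := fun h => hns ⟨h, sdiff_subset⟩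
  refine ⟨⟨⟨hH.1, hH.ne_ground⟩, ⟨M.isFlat_closure _, hproper⟩,
    union_closure_compl_eq_ground hH.1.subset_ground⟩, hmod, ?_⟩
  exact hsat _ (M.isFlat_closure _) (hmod.roundSet_closure_compl hH)
end

section
/- Let M be a matroid. Then M is supersolvable if and only if each of its connected components is supersolvable; and M is saturated if and only if each of its connected components is saturated. In particular, for a direct sum M = M_1 ⊕ M_2, M is supersolvable (respectively saturated) if and only if both M_1 and M_2 are supersolvable (respectively saturated). -/
open Set

/-!
Ranks, flats and modular flats of a direct sum `M₁ ⊕ M₂` are determined by their traces on the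
two ground sets. Hence chains of modular flats of the summands concatenate to a chain in the sum;
conversely a chain in the sum projects to a chain in each summand once repetitions are skipped,
because the rank of the trace grows by at most one per step. A round sum has a summand of rank
zero (otherwise `M₁.E ∪ M₂.loops` and `M₁.loops ∪ M₂.E` cover it), and adding a summand of rank
zero does not affect roundness; this transfers saturation in both directions.

By strong circuit elimination, lying in a common circuit is transitive, so every circuit lies
inside a connected component or avoids it. Thus `M` is the direct sum of the component of `x` and
the restriction to its complement, whose components are those of `M` other than this one, and
induction on the size of the ground set reduces the statement for components to direct sums.
-/

namespace Set

variable {α : Type*} {A B A' B' S : Set α}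

lemma union_inter_of_subset_of_disjoint (hA : A ⊆ S) (hB : Disjoint B S) : (A ∪ B) ∩ S = A := by
  rw [union_inter_distrib_right, inter_eq_self_of_subset_left hA, hB.inter_eq, union_empty]

lemma union_inter_union_of_disjoint (hA : Disjoint A B') (hB : Disjoint B A') :
    (A ∪ B) ∩ (A' ∪ B') = A ∩ A' ∪ B ∩ B' := by
  ext x
  have := hA.notMem_of_mem_left (a := x)
  have := hB.notMem_of_mem_left (a := x)
  simp only [mem_union, mem_inter_iff]
  tauto

end Set

lemma Nat.exists_section_of_le_succ {h : ℕ → ℕ} {r : ℕ} (h0 : h 0 = 0)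
    (hstep : ∀ i < r, h (i + 1) ≤ h i + 1) :
    ∃ p : ℕ → ℕ, (∀ j ≤ h r, p j ≤ r ∧ h (p j) = j) ∧ ∀ j < h r, p j ≤ p (j + 1) := by
  have hne (j : ℕ) (hj : j ≤ h r) : {i | j ≤ h i}.Nonempty := ⟨r, hj⟩
  refine ⟨fun j ↦ sInf {i | j ≤ h i}, fun j hj ↦ ⟨Nat.sInf_le (s := {i | j ≤ h i}) hj, ?_⟩,
    fun j hj ↦ Nat.sInf_le ((Nat.le_succ j).trans (Nat.sInf_mem (hne (j + 1) hj)))⟩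
  show h (sInf {i | j ≤ h i}) = j
  have hjp : j ≤ h (sInf {i | j ≤ h i}) := Nat.sInf_mem (hne j hj)
  have hpr : sInf {i | j ≤ h i} ≤ r := Nat.sInf_le (s := {i | j ≤ h i}) hj
  refine le_antisymm ?_ hjp
  -- the least `i` with `j ≤ h i` cannot overshoot `j`, since `h` grows by at most one per step
  obtain hp0 | hp0 := Nat.eq_zero_or_pos (sInf {i | j ≤ h i})
  · rw [hp0, h0]
    exact j.zero_le
  · have hlt : ¬ j ≤ h (sInf {i | j ≤ h i} - 1) :=
      Nat.notMem_of_lt_sInf (s := {i | j ≤ h i}) (by omega)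
    have := hstep (sInf {i | j ≤ h i} - 1) (by omega)
    rw [Nat.sub_add_cancel hp0] at this
    omega

namespace Matroid

variable {α : Type*}

section Rank

variable {M : Matroid α} {X Y : Set α}

lemma mRank_restrict (M : Matroid α) (R X : Set α) : (M ↾ R).mRank X = M.mRank (X ∩ R) := by
  simp only [mRank, restrict_indep_iff, subset_inter_iff]
  congr! 3 with n
  exact exists_congr fun I ↦ by tauto

lemma mRk_restrict (M : Matroid α) (R : Set α) : (M ↾ R).mRk = M.mRank R := by
  rw [mRk, mRank_restrict, restrict_ground_eq, inter_self]

lemma cast_mRank [M.RankFinite] (X : Set α) : (M.mRank X : ℕ∞) = M.eRk X := by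
  obtain ⟨I, hI⟩ := M.exists_isBasis' X
  have hIfin : I.Finite := hI.indep.finite
  have hmax : IsGreatest {n : ℕ | ∃ J, M.Indep J ∧ J ⊆ X ∧ J.ncard = n} I.ncard := by
    refine ⟨⟨I, hI.indep, hI.subset, rfl⟩, ?_⟩
    rintro _ ⟨J, hJ, hJX, rfl⟩
    have := hI.encard_eq_eRk ▸ hJ.encard_le_eRk_of_subset hJX
    rwa [← hJ.finite.cast_ncard_eq, ← hIfin.cast_ncard_eq, Nat.cast_le] at this
  rw [mRank, hmax.csSup_eq, hIfin.cast_ncard_eq, hI.encard_eq_eRk]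

lemma mRank_mono_s19 [M.RankFinite] (hXY : X ⊆ Y) : M.mRank X ≤ M.mRank Y := by
  exact_mod_cast (cast_mRank X).trans_le ((M.eRk_mono hXY).trans_eq (cast_mRank Y).symm)

lemma mRank_eq_zero_iff [M.RankFinite] : M.mRank X = 0 ↔ X ∩ M.E ⊆ M.loops := by
  rw [← eRk_eq_zero_iff', ← cast_mRank, Nat.cast_eq_zero]

lemma mRank_empty [M.RankFinite] : M.mRank ∅ = 0 :=
  mRank_eq_zero_iff.2 (by simp)

end Rank

section Modular

variable {M : Matroid α} {F : Set α}

lemma isModularFlat_ground (M : Matroid α) : M.IsModularFlat M.E :=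
  ⟨M.ground_isFlat, fun F hF ↦ by
    rw [union_eq_self_of_subset_right hF.subset_ground,
      inter_eq_self_of_subset_right hF.subset_ground]⟩

lemma IsFlat.subset_loops_of_mRank_eq_zero [M.RankFinite] (hF : M.IsFlat F) (h0 : M.mRank F = 0) :
    F ⊆ M.loops := by
  rwa [mRank_eq_zero_iff, inter_eq_self_of_subset_left hF.subset_ground] at h0

lemma IsFlat.isModularFlat_of_mRank_eq_zero [M.RankFinite] (hF : M.IsFlat F)
    (h0 : M.mRank F = 0) : M.IsModularFlat F := by
  refine ⟨hF, fun F' hF' ↦ ?_⟩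
  have hFF' := (hF.subset_loops_of_mRank_eq_zero h0).trans hF'.loops_subset
  rw [union_eq_self_of_subset_left hFF', inter_eq_self_of_subset_left hFF', add_comm]

lemma IsFlat.eq_ground_of_mRk_eq_zero [M.RankFinite] (hF : M.IsFlat F) (h0 : M.mRk = 0) :
    F = M.E :=
  hF.subset_ground.antisymm <|
    (M.ground_isFlat.subset_loops_of_mRank_eq_zero h0).trans hF.loops_subset

lemma loops_ne_ground_of_mRk_ne_zero {M : Matroid α} [M.RankFinite] (h : M.mRk ≠ 0) :
    M.loops ≠ M.E :=
  fun h' ↦ h (mRank_eq_zero_iff.2 (h' ▸ inter_subset_left))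

lemma supersolvable_emptyOn : (emptyOn α).Supersolvable := by
  have hrk : (emptyOn α).mRk = 0 := mRank_empty
  exact ⟨fun _ ↦ ∅, fun i hi ↦ ⟨(emptyOn α).isModularFlat_ground, by rw [mRank_empty]; omega⟩,
    fun i hi ↦ by omega⟩

lemma saturated_emptyOn : (emptyOn α).Saturated := fun F hF _ ↦ by
  rw [subset_empty_iff.1 hF.subset_ground]
  exact (emptyOn α).isModularFlat_ground

end Modular

section DisjointSum

variable {M₁ M₂ : Matroid α} {hdj : Disjoint M₁.E M₂.E} {A A' B B' H I J X : Set α}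

lemma union_inter_ground_left (hdj : Disjoint M₁.E M₂.E) (hA : A ⊆ M₁.E) (hB : B ⊆ M₂.E) :
    (A ∪ B) ∩ M₁.E = A :=
  union_inter_of_subset_of_disjoint hA (hdj.symm.mono_left hB)

lemma union_inter_ground_right (hdj : Disjoint M₁.E M₂.E) (hA : A ⊆ M₁.E) (hB : B ⊆ M₂.E) :
    (A ∪ B) ∩ M₂.E = B := by
  rw [union_comm, union_inter_of_subset_of_disjoint hB (hdj.mono_left hA)]

lemma inter_ground_union_inter_ground (hX : X ⊆ (M₁.disjointSum M₂ hdj).E) :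
    X ∩ M₁.E ∪ X ∩ M₂.E = X := by
  rw [← inter_union_distrib_left, inter_eq_self_of_subset_left (disjointSum_ground_eq ▸ hX)]

instance [M₁.RankFinite] [M₂.RankFinite] : (M₁.disjointSum M₂ hdj).RankFinite := by
  obtain ⟨B, hB⟩ := (M₁.disjointSum M₂ hdj).exists_isBase
  refine hB.rankFinite_of_finite ?_
  rw [← inter_ground_union_inter_ground hB.subset_ground]
  rw [disjointSum_isBase_iff] at hB
  exact hB.1.finite.union hB.2.1.finite

lemma disjointSum_union_eq_ground_iff (hA : A ⊆ M₁.E) (hB : B ⊆ M₂.E) :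
    A ∪ B = (M₁.disjointSum M₂ hdj).E ↔ A = M₁.E ∧ B = M₂.E := by
  refine ⟨fun h ↦ ⟨?_, ?_⟩, fun h ↦ by rw [h.1, h.2, disjointSum_ground_eq]⟩
  · rw [← union_inter_ground_left hdj hA hB, h, disjointSum_ground_eq,
      union_inter_ground_left hdj subset_rfl subset_rfl]
  · rw [← union_inter_ground_right hdj hA hB, h, disjointSum_ground_eq,
      union_inter_ground_right hdj subset_rfl subset_rfl]

lemma isBasis_disjointSum_union (hI : M₁.IsBasis I A) (hJ : M₂.IsBasis J B) :
    (M₁.disjointSum M₂ hdj).IsBasis (I ∪ J) (A ∪ B) := by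
  rw [disjointSum_isBasis_iff,
    union_inter_ground_left hdj hI.indep.subset_ground hJ.indep.subset_ground,
    union_inter_ground_right hdj hI.indep.subset_ground hJ.indep.subset_ground,
    union_inter_ground_left hdj hI.subset_ground hJ.subset_ground,
    union_inter_ground_right hdj hI.subset_ground hJ.subset_ground]
  exact ⟨hI, hJ, union_subset_union hI.subset hJ.subset,
    union_subset_union hI.subset_ground hJ.subset_ground⟩

lemma eRk_disjointSum_union (hA : A ⊆ M₁.E) (hB : B ⊆ M₂.E) :
    (M₁.disjointSum M₂ hdj).eRk (A ∪ B) = M₁.eRk A + M₂.eRk B := by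
  obtain ⟨I, hI⟩ := M₁.exists_isBasis A
  obtain ⟨J, hJ⟩ := M₂.exists_isBasis B
  rw [← (isBasis_disjointSum_union (hdj := hdj) hI hJ).encard_eq_eRk, ← hI.encard_eq_eRk,
    ← hJ.encard_eq_eRk, encard_union_eq (hdj.mono hI.indep.subset_ground hJ.indep.subset_ground)]

lemma IsFlat.of_disjointSum_union_left (h : (M₁.disjointSum M₂ hdj).IsFlat (A ∪ B))
    (hA : A ⊆ M₁.E) (hB : B ⊆ M₂.E) : M₁.IsFlat A := by
  refine ⟨fun I X hIA hIX ↦ ?_, hA⟩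
  obtain ⟨J, hJ⟩ := M₂.exists_isBasis B
  have hXB := inter_subset_inter_left M₁.E <| h.subset_of_isBasis_of_isBasis
    (isBasis_disjointSum_union hIA hJ) (isBasis_disjointSum_union hIX hJ)
  rwa [union_inter_ground_left hdj hIX.subset_ground hB, union_inter_ground_left hdj hA hB] at hXB

lemma isFlat_disjointSum_union_iff (hA : A ⊆ M₁.E) (hB : B ⊆ M₂.E) :
    (M₁.disjointSum M₂ hdj).IsFlat (A ∪ B) ↔ M₁.IsFlat A ∧ M₂.IsFlat B := by
  refine ⟨fun h ↦ ⟨h.of_disjointSum_union_left hA hB, ?_⟩, fun ⟨hA, hB⟩ ↦ ⟨fun I X hI hIX ↦ ?_, ?_⟩⟩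
  · rw [disjointSum_comm, union_comm] at h
    exact h.of_disjointSum_union_left hB hA
  · rw [disjointSum_isBasis_iff, union_inter_ground_left hdj hA.subset_ground hB.subset_ground,
      union_inter_ground_right hdj hA.subset_ground hB.subset_ground] at hI
    rw [disjointSum_isBasis_iff] at hIX
    refine (inter_ground_union_inter_ground (hdj := hdj) ?_).superset.trans (union_subset_union
      (hA.subset_of_isBasis_of_isBasis hI.1 hIX.1) (hB.subset_of_isBasis_of_isBasis hI.2.1 hIX.2.1))
    rw [disjointSum_ground_eq]
    exact hIX.2.2.2
  · rw [disjointSum_ground_eq]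
    exact union_subset_union hA.subset_ground hB.subset_ground

lemma disjointSum_restrict_union (hA : A ⊆ M₁.E) (hB : B ⊆ M₂.E) :
    (M₁.disjointSum M₂ hdj) ↾ (A ∪ B) = (M₁ ↾ A).disjointSum (M₂ ↾ B) (hdj.mono hA hB) := by
  refine ext_indep (by simp) fun I hI ↦ ?_
  rw [restrict_ground_eq] at hI
  have h₁ : I ∩ M₁.E = I ∩ A := by
    rw [← union_inter_ground_left hdj hA hB, ← inter_assoc, inter_eq_self_of_subset_left hI]
  have h₂ : I ∩ M₂.E = I ∩ B := by
    rw [← union_inter_ground_right hdj hA hB, ← inter_assoc, inter_eq_self_of_subset_left hI]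
  simp only [restrict_indep_iff, disjointSum_indep_iff, restrict_ground_eq, h₁, h₂,
    inter_subset_right, hI, and_true, hI.trans (union_subset_union hA hB)]

lemma isProperFlat_disjointSum_union_iff (hA : A ⊆ M₁.E) (hB : B ⊆ M₂.E) :
    (M₁.disjointSum M₂ hdj).IsProperFlat (A ∪ B) ↔
      M₁.IsFlat A ∧ M₂.IsFlat B ∧ (A ≠ M₁.E ∨ B ≠ M₂.E) := by
  rw [IsProperFlat, isFlat_disjointSum_union_iff hA hB, Ne, disjointSum_union_eq_ground_iff hA hB,
    not_and_or, and_assoc]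

lemma VerticalCover.disjointSum_left (h : M₁.VerticalCover A A') :
    (M₁.disjointSum M₂ hdj).VerticalCover (A ∪ M₂.E) (A' ∪ M₂.E) := by
  obtain ⟨⟨hA, hAE⟩, ⟨hA', hA'E⟩, hAA'⟩ := h
  refine ⟨(isProperFlat_disjointSum_union_iff hA.subset_ground subset_rfl).2
      ⟨hA, M₂.ground_isFlat, Or.inl hAE⟩,
    (isProperFlat_disjointSum_union_iff hA'.subset_ground subset_rfl).2
      ⟨hA', M₂.ground_isFlat, Or.inl hA'E⟩, ?_⟩
  rw [← union_union_distrib_right, hAA', disjointSum_ground_eq]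

lemma Round.of_disjointSum_left (h : (M₁.disjointSum M₂ hdj).Round) : M₁.Round :=
  fun _ _ hAA' ↦ h _ _ hAA'.disjointSum_left

lemma IsProperFlat.inter_ground_left_of_mRk_eq_zero [M₂.RankFinite]
    (h : (M₁.disjointSum M₂ hdj).IsProperFlat H) (h₂ : M₂.mRk = 0) :
    M₁.IsProperFlat (H ∩ M₁.E) := by
  rw [← inter_ground_union_inter_ground h.1.subset_ground,
    isProperFlat_disjointSum_union_iff inter_subset_right inter_subset_right] at h
  obtain ⟨hH₁, hH₂, hne⟩ := h
  exact ⟨hH₁, hne.resolve_right (not_not.2 (hH₂.eq_ground_of_mRk_eq_zero h₂))⟩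

lemma Round.disjointSum_of_mRk_eq_zero [M₂.RankFinite] (h : M₁.Round) (h₂ : M₂.mRk = 0) :
    (M₁.disjointSum M₂ hdj).Round := by
  rintro H H' ⟨hH, hH', hHH'⟩
  refine h (H ∩ M₁.E) (H' ∩ M₁.E) ⟨hH.inter_ground_left_of_mRk_eq_zero h₂,
    hH'.inter_ground_left_of_mRk_eq_zero h₂, ?_⟩
  rw [← union_inter_distrib_right, hHH', disjointSum_ground_eq,
    union_inter_ground_left hdj subset_rfl subset_rfl]

variable [M₁.RankFinite] [M₂.RankFinite]

lemma mRank_disjointSum_union (hA : A ⊆ M₁.E) (hB : B ⊆ M₂.E) :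
    (M₁.disjointSum M₂ hdj).mRank (A ∪ B) = M₁.mRank A + M₂.mRank B := by
  have h := eRk_disjointSum_union (hdj := hdj) hA hB
  rw [← cast_mRank, ← cast_mRank, ← cast_mRank] at h
  exact_mod_cast h

lemma mRk_disjointSum : (M₁.disjointSum M₂ hdj).mRk = M₁.mRk + M₂.mRk := by
  rw [mRk, disjointSum_ground_eq, mRank_disjointSum_union subset_rfl subset_rfl, mRk, mRk]

lemma mRank_union_add_mRank_inter_disjointSum (hA : A ⊆ M₁.E) (hB : B ⊆ M₂.E) (hA' : A' ⊆ M₁.E)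
    (hB' : B' ⊆ M₂.E) :
    (M₁.disjointSum M₂ hdj).mRank (A ∪ B ∪ (A' ∪ B')) +
        (M₁.disjointSum M₂ hdj).mRank ((A ∪ B) ∩ (A' ∪ B')) =
      M₁.mRank (A ∪ A') + M₁.mRank (A ∩ A') + (M₂.mRank (B ∪ B') + M₂.mRank (B ∩ B')) := by
  rw [union_union_union_comm,
    union_inter_union_of_disjoint (hdj.mono hA hB') (hdj.symm.mono hB hA'),
    mRank_disjointSum_union (union_subset hA hA') (union_subset hB hB'),
    mRank_disjointSum_union (inter_subset_left.trans hA) (inter_subset_left.trans hB)]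
  ring

lemma IsModularFlat.of_disjointSum_union_left (h : (M₁.disjointSum M₂ hdj).IsModularFlat (A ∪ B))
    (hA : A ⊆ M₁.E) (hB : B ⊆ M₂.E) : M₁.IsModularFlat A := by
  obtain ⟨hAflat, hBflat⟩ := (isFlat_disjointSum_union_iff hA hB).1 h.1
  refine ⟨hAflat, fun A' hA' ↦ ?_⟩
  -- test the modularity of `A ∪ B` against `A' ∪ B`, whose `M₂`-part contributes nothing
  have hmod := h.2 (A' ∪ B) ((isFlat_disjointSum_union_iff hA'.subset_ground hB).2 ⟨hA', hBflat⟩)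
  rw [mRank_disjointSum_union hA hB, mRank_disjointSum_union hA'.subset_ground hB,
    mRank_union_add_mRank_inter_disjointSum hA hB hA'.subset_ground hB, union_self,
    inter_self] at hmod
  omega

lemma isModularFlat_disjointSum_union_iff (hA : A ⊆ M₁.E) (hB : B ⊆ M₂.E) :
    (M₁.disjointSum M₂ hdj).IsModularFlat (A ∪ B) ↔ M₁.IsModularFlat A ∧ M₂.IsModularFlat B := by
  refine ⟨fun h ↦ ⟨h.of_disjointSum_union_left hA hB, ?_⟩, fun ⟨hA', hB'⟩ ↦
    ⟨(isFlat_disjointSum_union_iff hA hB).2 ⟨hA'.1, hB'.1⟩, fun F hF ↦ ?_⟩⟩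
  · rw [disjointSum_comm, union_comm] at h
    exact h.of_disjointSum_union_left hB hA
  · have hFeq := inter_ground_union_inter_ground hF.subset_ground
    rw [← hFeq] at hF ⊢
    obtain ⟨hF₁, hF₂⟩ := (isFlat_disjointSum_union_iff inter_subset_right inter_subset_right).1 hF
    rw [mRank_disjointSum_union hA hB,
      mRank_disjointSum_union inter_subset_right inter_subset_right,
      mRank_union_add_mRank_inter_disjointSum hA hB inter_subset_right inter_subset_right]
    have := hA'.2 _ hF₁
    have := hB'.2 _ hF₂
    omega

lemma Supersolvable.disjointSum (h₁ : M₁.Supersolvable) (h₂ : M₂.Supersolvable) :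
    (M₁.disjointSum M₂ hdj).Supersolvable := by
  obtain ⟨F₁, hF₁, hc₁⟩ := h₁
  obtain ⟨F₂, hF₂, hc₂⟩ := h₂
  refine ⟨fun i ↦ F₁ (min i M₁.mRk) ∪ F₂ (i - M₁.mRk), fun i hi ↦ ?_, fun i hi ↦ ?_⟩ <;>
    rw [mRk_disjointSum] at hi
  · obtain ⟨hm₁, hr₁⟩ := hF₁ (min i M₁.mRk) (min_le_right _ _)
    obtain ⟨hm₂, hr₂⟩ := hF₂ (i - M₁.mRk) (by omega)
    refine ⟨(isModularFlat_disjointSum_union_iff hm₁.1.subset_ground hm₂.1.subset_ground).2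
      ⟨hm₁, hm₂⟩, ?_⟩
    rw [mRank_disjointSum_union hm₁.1.subset_ground hm₂.1.subset_ground, hr₁, hr₂]
    omega
  · dsimp only
    obtain hi₁ | hi₁ := lt_or_ge i M₁.mRk
    · rw [min_eq_left hi₁.le, min_eq_left hi₁, Nat.sub_eq_zero_of_le hi₁.le,
        Nat.sub_eq_zero_of_le hi₁]
      exact union_subset_union_left _ (hc₁ i hi₁)
    · rw [min_eq_right hi₁, min_eq_right (by omega), Nat.sub_add_comm hi₁]
      exact union_subset_union_right _ (hc₂ _ (by omega))

lemma Supersolvable.of_disjointSum_left (h : (M₁.disjointSum M₂ hdj).Supersolvable) :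
    M₁.Supersolvable := by
  obtain ⟨F, hF, hc⟩ := h
  set r := (M₁.disjointSum M₂ hdj).mRk
  have hmono : MonotoneOn F (Iic r) := monotoneOn_of_le_succ ordConnected_Iic fun i _ _ hi ↦ by
    rw [Order.succ_eq_add_one] at hi ⊢
    exact hc i hi
  have hsplit (i : ℕ) (hi : i ≤ r) : M₁.mRank (F i ∩ M₁.E) + M₂.mRank (F i ∩ M₂.E) = i := by
    rw [← mRank_disjointSum_union (hdj := hdj) inter_subset_right inter_subset_right,
      inter_ground_union_inter_ground (hdj := hdj) (hF i hi).1.1.subset_ground, (hF i hi).2]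
  have hmono₂ (i : ℕ) (hi : i < r) : M₂.mRank (F i ∩ M₂.E) ≤ M₂.mRank (F (i + 1) ∩ M₂.E) :=
    mRank_mono_s19 (inter_subset_inter_left _ (hc i hi))
  have hrk : M₁.mRank (F r ∩ M₁.E) = M₁.mRk := by
    have h₁ : M₁.mRank (F r ∩ M₁.E) ≤ M₁.mRk := mRank_mono_s19 inter_subset_right
    have h₂ : M₂.mRank (F r ∩ M₂.E) ≤ M₂.mRk := mRank_mono_s19 inter_subset_right
    have := hsplit r le_rfl
    have : r = M₁.mRk + M₂.mRk := mRk_disjointSum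
    omega
  obtain ⟨p, hp, hpmono⟩ := Nat.exists_section_of_le_succ (h := fun i ↦ M₁.mRank (F i ∩ M₁.E))
    (r := r) (by have := hsplit 0 (Nat.zero_le r); omega)
    (fun i hi ↦ by have := hsplit i hi.le; have := hsplit (i + 1) hi; have := hmono₂ i hi; omega)
  simp only [hrk] at hp hpmono
  refine ⟨fun j ↦ F (p j) ∩ M₁.E, fun j hj ↦ ⟨?_, (hp j hj).2⟩, fun j hj ↦ ?_⟩
  · have hm := (hF (p j) (hp j hj).1).1
    rw [← inter_ground_union_inter_ground hm.1.subset_ground] at hm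
    exact hm.of_disjointSum_union_left inter_subset_right inter_subset_right
  · exact inter_subset_inter_left _
      (hmono (hp j hj.le).1 (hp (j + 1) hj).1 (hpmono j hj))

lemma disjointSum_supersolvable_iff :
    (M₁.disjointSum M₂ hdj).Supersolvable ↔ M₁.Supersolvable ∧ M₂.Supersolvable :=
  ⟨fun h ↦ ⟨h.of_disjointSum_left, (disjointSum_comm (h := hdj) ▸ h).of_disjointSum_left⟩,
    fun h ↦ h.1.disjointSum h.2⟩

lemma not_round_disjointSum (h₁ : M₁.mRk ≠ 0) (h₂ : M₂.mRk ≠ 0) :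
    ¬ (M₁.disjointSum M₂ hdj).Round := by
  refine fun h ↦ h (M₁.E ∪ M₂.loops) (M₁.loops ∪ M₂.E) ⟨?_, ?_, ?_⟩
  · exact (isProperFlat_disjointSum_union_iff subset_rfl M₂.loops_subset_ground).2
      ⟨M₁.ground_isFlat, M₂.isFlat_closure ∅, Or.inr (loops_ne_ground_of_mRk_ne_zero h₂)⟩
  · exact (isProperFlat_disjointSum_union_iff M₁.loops_subset_ground subset_rfl).2
      ⟨M₁.isFlat_closure ∅, M₂.ground_isFlat, Or.inl (loops_ne_ground_of_mRk_ne_zero h₁)⟩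
  · rw [union_union_union_comm, union_eq_left.2 M₁.loops_subset_ground,
      union_eq_right.2 M₂.loops_subset_ground, disjointSum_ground_eq]

lemma Saturated.of_disjointSum_left (h : (M₁.disjointSum M₂ hdj).Saturated) : M₁.Saturated := by
  intro G hG hGr
  have hL := M₂.loops_subset_ground
  have hflat := (isFlat_disjointSum_union_iff (hdj := hdj) hG.subset_ground hL).2
    ⟨hG, M₂.isFlat_closure ∅⟩
  have hround : (M₁.disjointSum M₂ hdj).RoundSet (G ∪ M₂.loops) := by
    refine ⟨hflat.subset_ground, ?_⟩
    rw [disjointSum_restrict_union hG.subset_ground hL]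
    refine hGr.2.disjointSum_of_mRk_eq_zero ?_
    rw [mRk_restrict, mRank_eq_zero_iff]
    exact inter_subset_left
  exact (h _ hflat hround).of_disjointSum_union_left hG.subset_ground hL

lemma Saturated.disjointSum (h₁ : M₁.Saturated) (h₂ : M₂.Saturated) :
    (M₁.disjointSum M₂ hdj).Saturated := by
  intro F hF hFr
  have hFeq := inter_ground_union_inter_ground hF.subset_ground
  rw [← hFeq] at hF hFr ⊢
  obtain ⟨hA, hB⟩ := (isFlat_disjointSum_union_iff inter_subset_right inter_subset_right).1 hF
  have hround := hFr.2
  rw [disjointSum_restrict_union inter_subset_right inter_subset_right] at hround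
  rw [isModularFlat_disjointSum_union_iff inter_subset_right inter_subset_right]
  -- a round disjoint sum has a summand of rank zero; the other summand is then round
  by_cases hA0 : M₁.mRank (F ∩ M₁.E) = 0
  · rw [disjointSum_comm] at hround
    exact ⟨hA.isModularFlat_of_mRank_eq_zero hA0,
      h₂ _ hB ⟨inter_subset_right, hround.of_disjointSum_left⟩⟩
  by_cases hB0 : M₂.mRank (F ∩ M₂.E) = 0
  · exact ⟨h₁ _ hA ⟨inter_subset_right, hround.of_disjointSum_left⟩,
      hB.isModularFlat_of_mRank_eq_zero hB0⟩
  exact absurd hround (not_round_disjointSum (by rwa [mRk_restrict]) (by rwa [mRk_restrict]))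

lemma disjointSum_saturated_iff :
    (M₁.disjointSum M₂ hdj).Saturated ↔ M₁.Saturated ∧ M₂.Saturated :=
  ⟨fun h ↦ ⟨h.of_disjointSum_left, (disjointSum_comm (h := hdj) ▸ h).of_disjointSum_left⟩,
    fun h ↦ h.1.disjointSum h.2⟩

end DisjointSum

section Components

variable {M : Matroid α} {C C₁ C₂ K S : Set α} {x y z : α}

lemma circ_iff_isCircuit : M.Circ C ↔ M.IsCircuit C := by
  rw [isCircuit_iff_forall_ssubset, Dep, Circ]
  tauto

lemma connRel_iff : M.connRel x y ↔ x = y ∨ ∃ C, M.IsCircuit C ∧ x ∈ C ∧ y ∈ C := by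
  simp only [connRel, circ_iff_isCircuit]

lemma IsCircuit.exists_mem_sdiff_of_subset_union_sdiff {D D' : Set α} {e : α}
    (hD : M.IsCircuit D) (hC : M.IsCircuit C) (heD : e ∈ D) (hCD : C ⊆ (D ∪ D') \ {e}) :
    ∃ w ∈ C, w ∈ D' ∧ w ∉ D := by
  obtain ⟨w, hwC, hwD⟩ := not_subset.1 fun h ↦ (hCD (hC.eq_of_subset_isCircuit hD h ▸ heD)).2 rfl
  exact ⟨w, hwC, (hCD hwC).1.resolve_left hwD, hwD⟩

lemma IsCircuit.exists_isCircuit_of_inter_nonempty [M.Finitary] (hC₁ : M.IsCircuit C₁)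
    (hC₂ : M.IsCircuit C₂) (hx : x ∈ C₁) (hz : z ∈ C₂) (hC : (C₁ ∩ C₂).Nonempty) :
    ∃ C, M.IsCircuit C ∧ x ∈ C ∧ z ∈ C := by
  induction hn : (C₁ ∪ C₂).ncard using Nat.strong_induction_on generalizing C₁ C₂ with
  | _ n ih =>
  have hsmaller ⦃D₁ D₂ : Set α⦄ (hD₁ : M.IsCircuit D₁) (hD₂ : M.IsCircuit D₂) (hxD : x ∈ D₁)
      (hzD : z ∈ D₂) (hD : (D₁ ∩ D₂).Nonempty) (hss : D₁ ∪ D₂ ⊂ C₁ ∪ C₂) :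
      ∃ C, M.IsCircuit C ∧ x ∈ C ∧ z ∈ C :=
    ih _ (hn ▸ ncard_lt_ncard hss (hC₁.finite.union hC₂.finite)) hD₁ hD₂ hxD hzD hD rfl
  by_cases hz₁ : z ∈ C₁
  · exact ⟨C₁, hC₁, hx, hz₁⟩
  by_cases hx₂ : x ∈ C₂
  · exact ⟨C₂, hC₂, hx₂, hz⟩
  obtain ⟨e, he₁, he₂⟩ := hC
  obtain ⟨C₃, hC₃sub, hC₃, hzC₃⟩ := hC₂.strong_elimination hC₁ he₂ he₁ hz hz₁
  obtain ⟨C₄, hC₄sub, hC₄, hxC₄⟩ := hC₁.strong_elimination hC₂ he₁ he₂ hx hx₂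
  obtain ⟨w, hwC₃, hwC₁, hwC₂⟩ := hC₂.exists_mem_sdiff_of_subset_union_sdiff hC₃ he₂ hC₃sub
  obtain ⟨u, huC₄, huC₂, -⟩ := hC₁.exists_mem_sdiff_of_subset_union_sdiff hC₄ he₁ hC₄sub
  have hC₃sub' : C₃ ⊆ C₁ ∪ C₂ := fun a ha ↦ (hC₃sub ha).1.symm
  have hC₄sub' : C₄ ⊆ C₁ ∪ C₂ := fun a ha ↦ (hC₄sub ha).1
  obtain hlt | heq₃ := (union_subset subset_union_left hC₃sub').ssubset_or_eq
  · exact hsmaller hC₁ hC₃ hx hzC₃ ⟨w, hwC₁, hwC₃⟩ hlt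
  obtain hlt | heq₄ := (union_subset hC₄sub' subset_union_right).ssubset_or_eq
  · exact hsmaller hC₄ hC₂ hxC₄ hz ⟨u, huC₄, huC₂⟩ hlt
  -- otherwise `C₂ \ C₁ ⊆ C₃` and `C₁ \ C₂ ⊆ C₄`, so `C₃` and `C₄` meet, and their union misses `e`
  have hwC₄ : w ∈ C₄ := ((heq₄.symm ▸ Or.inl hwC₁ : w ∈ C₄ ∪ C₂)).resolve_right hwC₂
  refine hsmaller hC₄ hC₃ hxC₄ hzC₃ ⟨w, hwC₄, hwC₃⟩
    (ssubset_of_subset_of_ne (union_subset hC₄sub' hC₃sub') fun h ↦ ?_)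
  obtain he | he := (h ▸ Or.inl he₁ : e ∈ C₄ ∪ C₃)
  · exact (hC₄sub he).2 rfl
  · exact (hC₃sub he).2 rfl

lemma connRel.symm (h : M.connRel x y) : M.connRel y x := by
  rw [connRel_iff] at h ⊢
  obtain rfl | ⟨C, hC, hx, hy⟩ := h
  exacts [Or.inl rfl, Or.inr ⟨C, hC, hy, hx⟩]

lemma connRel.trans [M.Finitary] (hxy : M.connRel x y) (hyz : M.connRel y z) :
    M.connRel x z := by
  rw [connRel_iff] at hxy hyz ⊢
  obtain rfl | ⟨C₁, hC₁, hx, hy₁⟩ := hxy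
  · exact hyz
  obtain rfl | ⟨C₂, hC₂, hy₂, hz⟩ := hyz
  · exact Or.inr ⟨C₁, hC₁, hx, hy₁⟩
  exact Or.inr (hC₁.exists_isCircuit_of_inter_nonempty hC₂ hx hz ⟨y, hy₁, hy₂⟩)

def component (M : Matroid α) (x : α) : Set α := {y | y ∈ M.E ∧ M.connRel x y}

lemma mem_component_iff : y ∈ M.component x ↔ y ∈ M.E ∧ M.connRel x y := Iff.rfl

lemma component_subset_ground : M.component x ⊆ M.E := fun _ hy ↦ hy.1

lemma component_eq_of_mem [M.Finitary] (hy : y ∈ M.component x) :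
    M.component y = M.component x := by
  ext
  exact and_congr_right fun _ ↦ ⟨hy.2.trans, hy.2.symm.trans⟩

lemma IsCircuit.subset_component_of_mem [M.Finitary] (hK : M.IsCircuit K) (hyK : y ∈ K)
    (hy : y ∈ M.component x) : K ⊆ M.component x :=
  fun _ hw ↦ ⟨hK.subset_ground hw, hy.2.trans (connRel_iff.2 (Or.inr ⟨K, hK, hyK, hw⟩))⟩

lemma IsCircuit.subset_or_disjoint_component [M.Finitary] (hK : M.IsCircuit K) :
    K ⊆ M.component x ∨ Disjoint K (M.component x) := by
  refine or_iff_not_imp_right.2 fun h ↦ ?_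
  obtain ⟨y, hyK, hy⟩ := not_disjoint_iff.1 h
  exact hK.subset_component_of_mem hyK hy

lemma eq_disjointSum_restrict_of_forall_isCircuit (hS : S ⊆ M.E)
    (h : ∀ K, M.IsCircuit K → K ⊆ S ∨ Disjoint K S) :
    M = (M ↾ S).disjointSum (M ↾ (M.E \ S)) (by simpa using disjoint_sdiff_right) := by
  refine ext_indep (by simp [union_sdiff_cancel hS]) fun I hI ↦ ?_
  simp only [disjointSum_indep_iff, restrict_indep_iff, restrict_ground_eq,
    union_sdiff_cancel hS, hI, inter_subset_right, and_true]
  refine ⟨fun hI' ↦ ⟨hI'.subset inter_subset_left, hI'.subset inter_subset_left⟩,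
    fun ⟨h₁, h₂⟩ ↦ (indep_iff_forall_subset_not_isCircuit hI).2 fun K hKI hK ↦ ?_⟩
  obtain hKS | hKS := h K hK
  · exact hK.not_indep (h₁.subset (subset_inter hKI hKS))
  · exact hK.not_indep (h₂.subset (subset_inter hKI (subset_sdiff.2 ⟨hK.subset_ground, hKS⟩)))

lemma component_restrict_ground_diff [M.Finitary] (hy : y ∈ M.E \ M.component x) :
    (M ↾ (M.E \ M.component x)).component y = M.component y := by
  ext w
  simp only [mem_component_iff, connRel_iff, restrict_isCircuit_iff sdiff_subset,
    restrict_ground_eq]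
  refine ⟨fun ⟨hw, hyw⟩ ↦ ⟨hw.1, hyw.imp_right fun ⟨K, ⟨hK, _⟩, hyK, hwK⟩ ↦ ⟨K, hK, hyK, hwK⟩⟩,
    fun ⟨hw, hyw⟩ ↦ ?_⟩
  obtain rfl | ⟨K, hK, hyK, hwK⟩ := hyw
  · exact ⟨hy, Or.inl rfl⟩
  -- `K` avoids the component of `x`, since otherwise it would lie inside it, together with `y`
  have hKS : K ⊆ M.E \ M.component x := fun a haK ↦
    ⟨hK.subset_ground haK, fun ha ↦ hy.2 (hK.subset_component_of_mem haK ha hyK)⟩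
  exact ⟨hKS hwK, Or.inr ⟨K, ⟨hK, hKS⟩, hyK, hwK⟩⟩

lemma component_subset_ground_diff [M.Finitary] (hy : y ∈ M.E \ M.component x) :
    M.component y ⊆ M.E \ M.component x :=
  component_restrict_ground_diff hy ▸ component_subset_ground

theorem iff_forall_component {P : Matroid α → Prop} (hP₀ : P (emptyOn α))
    (hP : ∀ (M₁ M₂ : Matroid α) [M₁.Finite] [M₂.Finite] (hdj : Disjoint M₁.E M₂.E),
      P (M₁.disjointSum M₂ hdj) ↔ P M₁ ∧ P M₂)
    (M : Matroid α) [M.Finite] : P M ↔ ∀ x ∈ M.E, P (M ↾ M.component x) := by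
  induction hn : M.E.ncard using Nat.strong_induction_on generalizing M with
  | _ n ih =>
  obtain hE | ⟨x, hx⟩ := M.E.eq_empty_or_nonempty
  · simp [ground_eq_empty_iff.1 hE, hP₀]
  have hxC : x ∈ M.component x := ⟨hx, connRel_iff.2 (Or.inl rfl)⟩
  have : (M ↾ M.component x).Finite := ⟨M.ground_finite.subset component_subset_ground⟩
  have : (M ↾ (M.E \ M.component x)).Finite := ⟨M.ground_finite.subset sdiff_subset⟩
  have hsplit := hP (M ↾ M.component x) (M ↾ (M.E \ M.component x))
    (by simpa using disjoint_sdiff_right)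
  rw [← eq_disjointSum_restrict_of_forall_isCircuit component_subset_ground
    fun K hK ↦ hK.subset_or_disjoint_component] at hsplit
  have hlt : (M ↾ (M.E \ M.component x)).E.ncard < n :=
    hn ▸ ncard_lt_ncard (sdiff_ssubset_left_iff.2 ⟨x, hx, hxC⟩) M.ground_finite
  rw [hsplit, ih _ hlt _ rfl]
  refine ⟨fun ⟨hC, hD⟩ y hy ↦ ?_, fun h ↦ ⟨h x hx, fun y hy ↦ ?_⟩⟩
  · by_cases hyC : y ∈ M.component x
    · rwa [component_eq_of_mem hyC]
    · have := hD y ⟨hy, hyC⟩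
      rwa [component_restrict_ground_diff ⟨hy, hyC⟩,
        restrict_restrict_eq _ (component_subset_ground_diff ⟨hy, hyC⟩)] at this
  · rw [component_restrict_ground_diff hy, restrict_restrict_eq _ (component_subset_ground_diff hy)]
    exact h y hy.1

end Components

end Matroid

open Matroid

/-- A matroid is supersolvable (respectively saturated) if and only if each of its connected
components is supersolvable (respectively saturated); in particular, a direct sum `M₁ ⊕ M₂`
is supersolvable (respectively saturated) if and only if both summands are. -/
theorem supersolvable_saturated_components {α : Type*} {β : Type*} (M : Matroid α) [M.Finite]
    (M₁ M₂ : Matroid β) [M₁.Finite] [M₂.Finite] (hdj : Disjoint M₁.E M₂.E) :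
    (M.Supersolvable ↔ ∀ x ∈ M.E, (M ↾ {y | y ∈ M.E ∧ M.connRel x y}).Supersolvable) ∧
    (M.Saturated ↔ ∀ x ∈ M.E, (M ↾ {y | y ∈ M.E ∧ M.connRel x y}).Saturated) ∧
    ((M₁.disjointSum M₂ hdj).Supersolvable ↔ M₁.Supersolvable ∧ M₂.Supersolvable) ∧
    ((M₁.disjointSum M₂ hdj).Saturated ↔ M₁.Saturated ∧ M₂.Saturated) :=
  ⟨iff_forall_component supersolvable_emptyOn (fun _ _ _ _ _ ↦ disjointSum_supersolvable_iff) M,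
    iff_forall_component saturated_emptyOn (fun _ _ _ _ _ ↦ disjointSum_saturated_iff) M,
    disjointSum_supersolvable_iff, disjointSum_saturated_iff⟩
end
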